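/- Membership commutes with the logical connectives: ⊨ (x ∈ ¬φ) = ¬(x ∈ φ); ⊨ (x ∈ φ₁∧φ₂) = (x∈φ₁) ∧ (x∈φ₂); ⊨ (x ∈ ∃y.φ) = ∃y.(x ∈ φ) for x, y distinct; and ⊨ x ∈ σ(φ₁,...,φᵢ,...,φₙ) = ∃y.(y ∈ φᵢ ∧ x ∈ σ(φ₁,...,y,...,φₙ)) for fresh y. -/

import Mathlib

/-!
In a model of the definedness axiom `⌈x⌉`, the pattern `⌈ψ⌉` is the whole carrier when `ψ`
matches some element and empty otherwise, so `x ∈ φ` evaluates to the two-valued predicate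
"`ρ x` matches `φ`". The first three equalities are then the complement, intersection and union
laws for that predicate. For the fourth, `ρ x` matches `σ(φ₁,…,φₙ)` iff it matches
`σ(φ₁,…,y,…,φₙ)` for `y` valued at some element matching `φᵢ`; freshness of `y` is what keeps
the other arguments unchanged when `y` is updated.
-/

namespace ML

structure Signature where
  S : Type
  Sym : Type
  n : Sym → ℕ
  arg : (f : Sym) → Fin (n f) → S
  res : Sym → S

inductive Pattern (σ : Signature) : σ.S → Type
  | var (s : σ.S) (x : ℕ) : Pattern σ s
  | app (f : σ.Sym) (args : ∀ i : Fin (σ.n f), Pattern σ (σ.arg f i)) : Pattern σ (σ.res f)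
  | neg {s : σ.S} (φ : Pattern σ s) : Pattern σ s
  | and {s : σ.S} (φ ψ : Pattern σ s) : Pattern σ s
  | ex {s : σ.S} (s' : σ.S) (x : ℕ) (φ : Pattern σ s) : Pattern σ s

namespace Pattern

variable {σ : Signature}

def or {s : σ.S} (φ ψ : Pattern σ s) : Pattern σ s := .neg (.and (.neg φ) (.neg ψ))

def imp {s : σ.S} (φ ψ : Pattern σ s) : Pattern σ s := .or (.neg φ) ψ

def piff {s : σ.S} (φ ψ : Pattern σ s) : Pattern σ s := .and (.imp φ ψ) (.imp ψ φ)

def all {s : σ.S} (s' : σ.S) (x : ℕ) (φ : Pattern σ s) : Pattern σ s :=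
  .neg (.ex s' x (.neg φ))

end Pattern

/-- Free variables of a pattern, as sort-variable pairs. -/
def FV {σ : Signature} : {s : σ.S} → Pattern σ s → Set ((s : σ.S) × ℕ)
  | _, .var s x => {⟨s, x⟩}
  | _, .app _ args => ⋃ i, FV (args i)
  | _, .neg φ => FV φ
  | _, .and φ ψ => FV φ ∪ FV ψ
  | _, .ex s' x φ => FV φ \ {⟨s', x⟩}

structure Model (σ : Signature) where
  carrier : σ.S → Type
  nonempty : ∀ s, Nonempty (carrier s)
  interp : (f : σ.Sym) → (∀ i : Fin (σ.n f), carrier (σ.arg f i)) → Set (carrier (σ.res f))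

def Val {σ : Signature} (M : Model σ) := (s : σ.S) → ℕ → M.carrier s

open Classical in
noncomputable def Val.upd {σ : Signature} {M : Model σ} (ρ : Val M) (s : σ.S) (x : ℕ)
    (a : M.carrier s) : Val M :=
  fun s' y => if h : s' = s ∧ y = x then cast (congrArg M.carrier h.1).symm a else ρ s' y

/-- Pattern evaluation: the set of elements matching the pattern. -/
noncomputable def eval {σ : Signature} {M : Model σ} :
    {s : σ.S} → Pattern σ s → Val M → Set (M.carrier s)
  | _, .var s x, ρ => {ρ s x}
  | _, .app f args, ρ =>
      { b | ∃ a : ∀ i, M.carrier (σ.arg f i), (∀ i, a i ∈ eval (args i) ρ) ∧ b ∈ M.interp f a }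
  | _, .neg φ, ρ => (eval φ ρ)ᶜ
  | _, .and φ ψ, ρ => eval φ ρ ∩ eval ψ ρ
  | _, .ex s' x φ, ρ => ⋃ a : M.carrier s', eval φ (ρ.upd s' x a)

def Sat {σ : Signature} (M : Model σ) {s : σ.S} (φ : Pattern σ s) : Prop :=
  ∀ ρ : Val M, eval φ ρ = Set.univ

def Valid {σ : Signature} {s : σ.S} (φ : Pattern σ s) : Prop :=
  ∀ M : Model σ, Sat M φ

end ML
namespace ML

variable {σ : Signature}

/-- The argument sort of a unary (definedness) symbol. -/
def arg1 (d : σ.Sym) (hn : σ.n d = 1) : σ.S := σ.arg d ⟨0, by omega⟩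

/-- Definedness applied to a pattern: `⌈φ⌉`. -/
noncomputable def ceil (d : σ.Sym) (hn : σ.n d = 1) (φ : Pattern σ (arg1 d hn)) :
    Pattern σ (σ.res d) :=
  .app d (fun j => cast (by
    have hj : j = (⟨0, by omega⟩ : Fin (σ.n d)) := Fin.ext (by have := j.isLt; omega)
    rw [hj]; rfl) φ)

/-- The definedness axiom pattern `⌈x⌉`. -/
noncomputable def defAx (d : σ.Sym) (hn : σ.n d = 1) : Pattern σ (σ.res d) :=
  ceil d hn (.var (arg1 d hn) 0)

/-- Totality `⌊φ⌋ ≡ ¬⌈¬φ⌉`. -/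
noncomputable def floor (d : σ.Sym) (hn : σ.n d = 1) (φ : Pattern σ (arg1 d hn)) :
    Pattern σ (σ.res d) :=
  .neg (ceil d hn (.neg φ))

/-- Equality pattern `φ = φ' ≡ ⌊φ ↔ φ'⌋`. -/
noncomputable def eqP (d : σ.Sym) (hn : σ.n d = 1) (φ φ' : Pattern σ (arg1 d hn)) :
    Pattern σ (σ.res d) :=
  floor d hn (φ.piff φ')

/-- Membership pattern `x ∈ φ ≡ ⌈x ∧ φ⌉`. -/
noncomputable def mem (d : σ.Sym) (hn : σ.n d = 1) (x : ℕ) (φ : Pattern σ (arg1 d hn)) :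
    Pattern σ (σ.res d) :=
  ceil d hn ((Pattern.var (arg1 d hn) x).and φ)

/-- The context `σ(φ₁,…,□,…,φₙ)` with `ψ` plugged into the `i`-th position. -/
def plug (f : σ.Sym) (i : Fin (σ.n f)) (args : ∀ j : Fin (σ.n f), Pattern σ (σ.arg f j))
    (ψ : Pattern σ (σ.arg f i)) : Pattern σ (σ.res f) :=
  .app f (fun j => if h : j = i then cast (by rw [h]) ψ else args j)

/-- Bound variables of a pattern. -/
def BV : {s : σ.S} → Pattern σ s → Set ((s : σ.S) × ℕ)
  | _, .var _ _ => ∅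
  | _, .app _ args => ⋃ i, BV (args i)
  | _, .neg φ => BV φ
  | _, .and φ ψ => BV φ ∪ BV ψ
  | _, .ex s' x φ => BV φ ∪ {⟨s', x⟩}

open Classical in
/-- Substitution `φ[ψ/x]` of pattern `ψ` for variable `x` of sort `t` (capture-free
provided the bound variables of `φ` are disjoint from the free variables of `ψ`). -/
noncomputable def subst : {s : σ.S} → Pattern σ s → (t : σ.S) → ℕ → Pattern σ t → Pattern σ s
  | _, .var s' y, t, x, ψ =>
      if h : s' = t ∧ y = x then cast (by rw [h.1]) ψ else .var s' y
  | _, .app f args, t, x, ψ => .app f (fun i => subst (args i) t x ψ)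
  | _, .neg φ, t, x, ψ => .neg (subst φ t x ψ)
  | _, .and φ₁ φ₂, t, x, ψ => .and (subst φ₁ t x ψ) (subst φ₂ t x ψ)
  | _, .ex s' y φ, t, x, ψ =>
      if s' = t ∧ y = x then .ex s' y φ else .ex s' y (subst φ t x ψ)

/-- Semantic entailment from a set of axiom patterns. -/
def Entails (F : Set ((s : σ.S) × Pattern σ s)) {s : σ.S} (φ : Pattern σ s) : Prop :=
  ∀ M : Model σ, (∀ ψ ∈ F, Sat M ψ.2) → Sat M φ

/-- A pattern is functional in `M` iff it evaluates to a singleton under every valuation. -/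
def Functional (M : Model σ) {s : σ.S} (φ : Pattern σ s) : Prop :=
  ∀ ρ : Val M, ∃ a : M.carrier s, eval φ ρ = {a}

end ML

namespace ML

variable {σ : Signature} {M : Model σ}

theorem Val.upd_same (ρ : Val M) (s : σ.S) (x : ℕ) (a : M.carrier s) :
    ρ.upd s x a s x = a := by
  simp [Val.upd]

theorem Val.upd_ne (ρ : Val M) {s s' : σ.S} {x y : ℕ} (a : M.carrier s)
    (h : (⟨s, x⟩ : Σ _ : σ.S, ℕ) ≠ ⟨s', y⟩) : ρ.upd s x a s' y = ρ s' y := by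
  have : ¬(s' = s ∧ y = x) := by rintro ⟨rfl, rfl⟩; exact h rfl
  simp [Val.upd, this]

theorem Val.cast_apply (ρ : Val M) {s s' : σ.S} (hs : s = s')
    (h : M.carrier s = M.carrier s') (x : ℕ) : cast h (ρ s x) = ρ s' x := by
  subst hs; rfl

theorem FV_subset_app {f : σ.Sym} (args : ∀ j, Pattern σ (σ.arg f j)) (j : Fin (σ.n f)) :
    FV (args j) ⊆ FV (.app f args) :=
  Set.subset_iUnion (fun j => FV (args j)) j

theorem eval_congr_of_eqOn_FV : ∀ {s : σ.S} (φ : Pattern σ s) {ρ ρ' : Val M},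
    (∀ p ∈ FV φ, ρ p.1 p.2 = ρ' p.1 p.2) → eval φ ρ = eval φ ρ'
  | _, .var s x, _, _, h => by simp only [eval, h ⟨s, x⟩ rfl]
  | _, .app f args, _, _, h => by
      simp only [eval, eval_congr_of_eqOn_FV (args _) fun p hp => h p (FV_subset_app args _ hp)]
  | _, .neg φ, _, _, h => by simp only [eval, eval_congr_of_eqOn_FV φ h]
  | _, .and φ ψ, _, _, h => by
      simp only [eval, eval_congr_of_eqOn_FV φ fun p hp => h p (Or.inl hp),
        eval_congr_of_eqOn_FV ψ fun p hp => h p (Or.inr hp)]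
  | _, .ex s' x φ, ρ, ρ', h => by
      refine Set.iUnion_congr fun a => eval_congr_of_eqOn_FV φ fun ⟨t, z⟩ hp => ?_
      by_cases hz : (⟨t, z⟩ : Σ _ : σ.S, ℕ) = ⟨s', x⟩
      · obtain ⟨rfl, rfl⟩ := Sigma.mk.inj_iff.1 hz
        simp only [Val.upd_same]
      · rw [Val.upd_ne _ _ (Ne.symm hz), Val.upd_ne _ _ (Ne.symm hz)]
        exact h _ ⟨hp, hz⟩

theorem eval_upd_of_not_mem_FV {s t : σ.S} {φ : Pattern σ s} {y : ℕ}
    (hy : (⟨t, y⟩ : Σ _ : σ.S, ℕ) ∉ FV φ) (ρ : Val M) (a : M.carrier t) :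
    eval φ (ρ.upd t y a) = eval φ ρ :=
  eval_congr_of_eqOn_FV φ fun _ hp => Val.upd_ne ρ a fun e => hy (e ▸ hp)

theorem mem_eval_cast {s s' : σ.S} (hs : s = s') (h : Pattern σ s = Pattern σ s')
    (φ : Pattern σ s) (ρ : Val M) (b : M.carrier s') :
    b ∈ eval (cast h φ) ρ ↔ cast (congrArg M.carrier hs.symm) b ∈ eval φ ρ := by
  subst hs; rfl

theorem mem_eval_var {s : σ.S} {x : ℕ} {ρ : Val M} {b : M.carrier s} :
    b ∈ eval (.var s x) ρ ↔ b = ρ s x :=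
  Iff.rfl

theorem mem_eval_app {f : σ.Sym} {args : ∀ j, Pattern σ (σ.arg f j)} {ρ : Val M}
    {b : M.carrier (σ.res f)} :
    b ∈ eval (.app f args) ρ ↔
      ∃ a : ∀ j, M.carrier (σ.arg f j),
        (∀ j, a j ∈ eval (args j) ρ) ∧ b ∈ M.interp f a :=
  Iff.rfl

theorem mem_eval_plug {f : σ.Sym} {i : Fin (σ.n f)} {args : ∀ j, Pattern σ (σ.arg f j)}
    {ψ : Pattern σ (σ.arg f i)} {ρ : Val M} {b : M.carrier (σ.res f)} :
    b ∈ eval (plug f i args ψ) ρ ↔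
      ∃ a : ∀ j, M.carrier (σ.arg f j),
        a i ∈ eval ψ ρ ∧ (∀ j ≠ i, a j ∈ eval (args j) ρ) ∧ b ∈ M.interp f a := by
  have plugged : ∀ (j : Fin (σ.n f)) (a : M.carrier (σ.arg f j)),
      a ∈ eval (if h : j = i then cast (by rw [h]) ψ else args j) ρ ↔
        if h : j = i then cast (congrArg (M.carrier ∘ σ.arg f) h) a ∈ eval ψ ρ
        else a ∈ eval (args j) ρ := by
    intro j a
    split_ifs with h
    · subst h; rfl
    · rfl
  simp only [plug, mem_eval_app, plugged]
  constructor
  · rintro ⟨a, ha, hb⟩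
    exact ⟨a, by simpa using ha i, fun j hj => by simpa [hj] using ha j, hb⟩
  · rintro ⟨a, hai, ha, hb⟩
    refine ⟨a, fun j => ?_, hb⟩
    split_ifs with h
    · subst h; exact hai
    · exact ha j h

theorem mem_eval_app_iff_exists_plug_var {f : σ.Sym} {i : Fin (σ.n f)}
    {args : ∀ j, Pattern σ (σ.arg f j)} {y : ℕ}
    (hy : (⟨σ.arg f i, y⟩ : Σ _ : σ.S, ℕ) ∉ FV (.app f args)) (ρ : Val M)
    (b : M.carrier (σ.res f)) :
    b ∈ eval (.app f args) ρ ↔ ∃ c ∈ eval (args i) ρ,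
      b ∈ eval (plug f i args (.var (σ.arg f i) y)) (ρ.upd (σ.arg f i) y c) := by
  have fresh : ∀ j c, eval (args j) (ρ.upd (σ.arg f i) y c) = eval (args j) ρ :=
    fun j => eval_upd_of_not_mem_FV (fun h => hy (FV_subset_app args j h)) ρ
  simp only [mem_eval_app, mem_eval_plug, mem_eval_var, Val.upd_same, fresh]
  constructor
  · rintro ⟨a, ha, hb⟩
    exact ⟨a i, ha i, a, rfl, fun j _ => ha j, hb⟩
  · rintro ⟨c, hc, a, rfl, ha, hb⟩
    refine ⟨a, fun j => ?_, hb⟩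
    by_cases h : j = i
    · exact h ▸ hc
    · exact ha j h

theorem mem_eval_ceil (d : σ.Sym) (hn : σ.n d = 1) (ψ : Pattern σ (arg1 d hn)) (ρ : Val M)
    (b : M.carrier (σ.res d)) :
    b ∈ eval (ceil d hn ψ) ρ ↔
      ∃ a : ∀ j, M.carrier (σ.arg d j),
        a ⟨0, hn ▸ Nat.one_pos⟩ ∈ eval ψ ρ ∧ b ∈ M.interp d a := by
  have only_arg (j : Fin (σ.n d)) : j = ⟨0, hn ▸ Nat.one_pos⟩ := Fin.ext (by omega)
  rw [ceil, mem_eval_app]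
  refine exists_congr fun a => and_congr_left' ⟨fun ha => ?_, fun ha j => ?_⟩
  · exact (mem_eval_cast rfl _ ψ ρ _).1 (ha _)
  · obtain rfl := (only_arg j).symm
    exact (mem_eval_cast rfl _ ψ ρ _).2 ha

theorem exists_interp_of_sat_defAx {d : σ.Sym} {hn : σ.n d = 1} (hM : Sat M (defAx d hn))
    (c : M.carrier (arg1 d hn)) (b : M.carrier (σ.res d)) :
    ∃ a : ∀ j, M.carrier (σ.arg d j),
      a ⟨0, hn ▸ Nat.one_pos⟩ = c ∧ b ∈ M.interp d a := by
  let ρ : Val M := fun s _ => Classical.choice (M.nonempty s)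
  have hb : b ∈ eval (defAx d hn) (ρ.upd (arg1 d hn) 0 c) := hM _ ▸ Set.mem_univ b
  obtain ⟨a, ha, hb⟩ := (mem_eval_ceil d hn _ _ b).1 hb
  exact ⟨a, ha.trans (Val.upd_same ρ _ 0 c), hb⟩

theorem eval_mem {d : σ.Sym} {hn : σ.n d = 1} (hM : Sat M (defAx d hn)) (x : ℕ)
    (φ : Pattern σ (arg1 d hn)) (ρ : Val M) :
    eval (mem d hn x φ) ρ = {_b | ρ (arg1 d hn) x ∈ eval φ ρ} := by
  ext b
  rw [mem, mem_eval_ceil]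
  constructor
  · rintro ⟨a, ⟨hx, hφ⟩, -⟩
    exact (hx : _ = _) ▸ hφ
  · intro hφ
    obtain ⟨a, ha, hb⟩ := exists_interp_of_sat_defAx hM (ρ (arg1 d hn) x) b
    exact ⟨a, ⟨ha, ha ▸ hφ⟩, hb⟩

section Connectives

variable {d : σ.Sym} {hn : σ.n d = 1}

theorem eval_mem_neg (hM : Sat M (defAx d hn)) (x : ℕ) (φ : Pattern σ (arg1 d hn))
    (ρ : Val M) : eval (mem d hn x φ.neg) ρ = eval (mem d hn x φ).neg ρ := by
  ext; simp only [eval, eval_mem hM]; rfl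

theorem eval_mem_and (hM : Sat M (defAx d hn)) (x : ℕ) (φ₁ φ₂ : Pattern σ (arg1 d hn))
    (ρ : Val M) :
    eval (mem d hn x (φ₁.and φ₂)) ρ = eval ((mem d hn x φ₁).and (mem d hn x φ₂)) ρ := by
  ext; simp only [eval, eval_mem hM]; rfl

theorem eval_mem_ex (hM : Sat M (defAx d hn)) {x y : ℕ} {s : σ.S}
    (hxy : (⟨s, y⟩ : Σ _ : σ.S, ℕ) ≠ ⟨arg1 d hn, x⟩) (φ : Pattern σ (arg1 d hn)) (ρ : Val M) :
    eval (mem d hn x (.ex s y φ)) ρ = eval (.ex s y (mem d hn x φ)) ρ := by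
  ext
  simp only [eval, eval_mem hM, Val.upd_ne ρ _ hxy, Set.mem_iUnion, Set.mem_ofPred_eq]

theorem eval_mem_app (hM : Sat M (defAx d hn)) {d₃ : σ.Sym} {hn₃ : σ.n d₃ = 1}
    (hM₃ : Sat M (defAx d₃ hn₃)) {f : σ.Sym} (hf : σ.res f = arg1 d hn) {i : Fin (σ.n f)}
    (h₃a : arg1 d₃ hn₃ = σ.arg f i) (h₃r : σ.res d₃ = σ.res d)
    (args : ∀ j, Pattern σ (σ.arg f j)) {x y : ℕ}
    (hy : (⟨σ.arg f i, y⟩ : Σ _ : σ.S, ℕ) ∉ FV (.app f args))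
    (hxy : (⟨σ.arg f i, y⟩ : Σ _ : σ.S, ℕ) ≠ ⟨arg1 d hn, x⟩) (ρ : Val M) :
    eval (mem d hn x (cast (by rw [hf]) (Pattern.app f args))) ρ =
      eval (.ex (σ.arg f i) y (.and
        (cast (by rw [h₃r]) (mem d₃ hn₃ y (cast (by rw [h₃a]) (args i))) :
          Pattern σ (σ.res d))
        (mem d hn x (cast (by rw [hf]) (plug f i args (.var (σ.arg f i) y)))))) ρ := by
  ext b
  change _ ↔ b ∈ ⋃ c, eval _ _ ∩ eval _ _
  simp only [Set.mem_iUnion, Set.mem_inter_iff, mem_eval_cast h₃r, eval_mem hM, eval_mem hM₃,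
    Set.mem_ofPred_eq, mem_eval_cast hf, mem_eval_cast h₃a.symm, Val.upd_ne ρ _ hxy,
    Val.cast_apply _ hf.symm, Val.cast_apply _ h₃a, Val.upd_same,
    eval_upd_of_not_mem_FV fun h => hy (FV_subset_app args i h)]
  exact mem_eval_app_iff_exists_plug_var hy ρ _

end Connectives

end ML

/-- membership commutes with the logical connectives:
`(x ∈ ¬φ) = ¬(x ∈ φ)`, `(x ∈ φ₁∧φ₂) = (x∈φ₁)∧(x∈φ₂)`,
`(x ∈ ∃y.φ) = ∃y.(x∈φ)` for distinct `x, y`, and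
`x ∈ σ(…,φᵢ,…) = ∃y.(y ∈ φᵢ ∧ x ∈ σ(…,y,…))` for fresh `y`
(the equalities stated as equal evaluations in every model with definedness). -/
theorem stmt17 {σ : ML.Signature} (d : σ.Sym) (hn : σ.n d = 1) :
    (∀ (x : ℕ) (φ : ML.Pattern σ (ML.arg1 d hn)) (M : ML.Model σ),
      ML.Sat M (ML.defAx d hn) → ∀ ρ : ML.Val M,
      ML.eval (ML.mem d hn x φ.neg) ρ = ML.eval (ML.Pattern.neg (ML.mem d hn x φ)) ρ) ∧
    (∀ (x : ℕ) (φ₁ φ₂ : ML.Pattern σ (ML.arg1 d hn)) (M : ML.Model σ),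
      ML.Sat M (ML.defAx d hn) → ∀ ρ : ML.Val M,
      ML.eval (ML.mem d hn x (φ₁.and φ₂)) ρ =
        ML.eval ((ML.mem d hn x φ₁).and (ML.mem d hn x φ₂)) ρ) ∧
    (∀ (x y : ℕ) (sy : σ.S) (φ : ML.Pattern σ (ML.arg1 d hn)),
      (⟨sy, y⟩ : (t : σ.S) × ℕ) ≠ ⟨ML.arg1 d hn, x⟩ →
      ∀ M : ML.Model σ, ML.Sat M (ML.defAx d hn) → ∀ ρ : ML.Val M,
      ML.eval (ML.mem d hn x (ML.Pattern.ex sy y φ)) ρ =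
        ML.eval (ML.Pattern.ex sy y (ML.mem d hn x φ)) ρ) ∧
    (∀ (d₃ : σ.Sym) (hn₃ : σ.n d₃ = 1) (f : σ.Sym) (hf : σ.res f = ML.arg1 d hn)
      (i : Fin (σ.n f)) (h₃a : ML.arg1 d₃ hn₃ = σ.arg f i) (h₃r : σ.res d₃ = σ.res d)
      (args : ∀ j : Fin (σ.n f), ML.Pattern σ (σ.arg f j)) (x y : ℕ),
      (⟨σ.arg f i, y⟩ : (t : σ.S) × ℕ) ∉ ML.FV (ML.Pattern.app f args) →
      (⟨σ.arg f i, y⟩ : (t : σ.S) × ℕ) ≠ ⟨ML.arg1 d hn, x⟩ →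
      ∀ M : ML.Model σ, ML.Sat M (ML.defAx d hn) → ML.Sat M (ML.defAx d₃ hn₃) →
      ∀ ρ : ML.Val M,
      ML.eval (ML.mem d hn x (cast (by rw [hf]) (ML.Pattern.app f args))) ρ =
        ML.eval (ML.Pattern.ex (σ.arg f i) y
          (ML.Pattern.and
            ((cast (by rw [h₃r]) (ML.mem d₃ hn₃ y (cast (by rw [h₃a]) (args i)))) :
              ML.Pattern σ (σ.res d))
            (ML.mem d hn x
              (cast (by rw [hf]) (ML.plug f i args (ML.Pattern.var (σ.arg f i) y)))))) ρ) := by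
  refine ⟨fun x φ M hM ρ => ML.eval_mem_neg hM x φ ρ,
    fun x φ₁ φ₂ M hM ρ => ML.eval_mem_and hM x φ₁ φ₂ ρ,
    fun x y sy φ hxy M hM ρ => ML.eval_mem_ex hM hxy φ ρ,
    fun d₃ hn₃ f hf i h₃a h₃r args x y hy hxy M hM hM₃ ρ =>
      ML.eval_mem_app hM hM₃ hf h₃a h₃r args hy hxy ρ⟩
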